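/- arXiv:1807.05159 — 5 statements merged into one kernel-verified Lean document; each statement's English description precedes it below -/
import Mathlib

section
/- Let N ∈ ℕ, 0 ≤ b_N ≤ N−1, and let B_N and P_N be the strict and periodic band prototypes with half-width b_N and bandwidth w_N = min(N, 2b_N + 1). Then the ℓ²-operator norms satisfy ‖P_N‖_op = w_N and w_N·(1 − δ_N) ≤ ‖B_N‖_op ≤ w_N, where δ_N = w_N/(4N) if 2b_N + 1 ≤ N and δ_N = (1 − b_N/N)² otherwise. -/
/-!
Both matrices are nonnegative and symmetric, so the Schur test bounds their operator norms by
the maximal row sum, which is `w_N` for `P_N` (every row of `P_N` is a cyclic shift of the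
first one) and at most `w_N` for `B_N ≤ P_N`. Conversely, testing against the all-ones vector
gives `‖A‖_op ≥ (∑ᵢⱼ Aᵢⱼ) / N`; this is `w_N` for `P_N`, and for `B_N` the total is
`N (2b + 1) - b (b + 1)`, since the `k`-th off-diagonal has `N - |k|` entries, and
`(2b + 1) - b (b + 1) / N ≥ w_N (1 - δ_N)` is elementary.
-/

open MeasureTheory ProbabilityTheory Filter Topology
open scoped ENNReal NNReal

noncomputable section

/-- The ℓ²-operator norm of a matrix, i.e. the norm of the induced operator on
Euclidean space. -/
def opNorm {N : ℕ} (A : Matrix (Fin N) (Fin N) ℝ) : ℝ :=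
  ‖Matrix.toEuclideanCLM (𝕜 := ℝ) A‖

/-- Strict band prototype `B_N`: entry `1` iff `|i - j| ≤ b`. -/
def strictBand (N b : ℕ) : Matrix (Fin N) (Fin N) ℝ := Matrix.of fun i j =>
  if ((i : ℤ) - (j : ℤ)).natAbs ≤ b then 1 else 0

/-- Periodic band prototype `P_N`: entry `1` iff `|i - j|_N ≤ b`, where
`|k|_N = min (|k|, N - |k|)`. -/
def periodicBand (N b : ℕ) : Matrix (Fin N) (Fin N) ℝ := Matrix.of fun i j =>
  if min ((i : ℤ) - (j : ℤ)).natAbs (N - ((i : ℤ) - (j : ℤ)).natAbs) ≤ b then 1 else 0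

/-- Entrywise multiplication by a band prototype. -/
def bandMask {N : ℕ} (B A : Matrix (Fin N) (Fin N) ℝ) : Matrix (Fin N) (Fin N) ℝ :=
  Matrix.of fun i j => B i j * A i j

open Finset

namespace Matrix

variable {n : Type*} [Fintype n] [DecidableEq n]

lemma toEuclideanCLM_apply_apply (A : Matrix n n ℝ) (x : EuclideanSpace ℝ n) (i : n) :
    toEuclideanCLM (𝕜 := ℝ) A x i = ∑ j, A i j * x j := rfl

/-- The Schur test, with constant weights. -/
theorem norm_toEuclideanCLM_le_of_sum_le {A : Matrix n n ℝ} {c : ℝ} (hc : 0 ≤ c)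
    (hA : ∀ i j, 0 ≤ A i j) (hrow : ∀ i, ∑ j, A i j ≤ c) (hcol : ∀ j, ∑ i, A i j ≤ c) :
    ‖toEuclideanCLM (𝕜 := ℝ) A‖ ≤ c := by
  refine ContinuousLinearMap.opNorm_le_bound _ hc fun x => ?_
  have hrow_sq (i : n) : (∑ j, A i j * x j) ^ 2 ≤ c * ∑ j, A i j * x j ^ 2 :=
    calc (∑ j, A i j * x j) ^ 2 ≤ (∑ j, A i j) * ∑ j, A i j * x j ^ 2 :=
          sum_sq_le_sum_mul_sum_of_sq_le_mul _ (fun j _ => hA i j)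
            (fun j _ => mul_nonneg (hA i j) (sq_nonneg _)) fun j _ => le_of_eq (by ring)
      _ ≤ c * ∑ j, A i j * x j ^ 2 := by
          gcongr
          · exact sum_nonneg fun j _ => mul_nonneg (hA i j) (sq_nonneg _)
          · exact hrow i
  have hsq : ‖toEuclideanCLM (𝕜 := ℝ) A x‖ ^ 2 ≤ (c * ‖x‖) ^ 2 :=
    calc ‖toEuclideanCLM (𝕜 := ℝ) A x‖ ^ 2 = ∑ i, (∑ j, A i j * x j) ^ 2 := by
          simp only [EuclideanSpace.real_norm_sq_eq, toEuclideanCLM_apply_apply]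
      _ ≤ ∑ i, c * ∑ j, A i j * x j ^ 2 := sum_le_sum fun i _ => hrow_sq i
      _ = c * ∑ j, (∑ i, A i j) * x j ^ 2 := by
          rw [← mul_sum, sum_comm]
          simp only [sum_mul]
      _ ≤ c * ∑ j, c * x j ^ 2 := by gcongr with j; exact hcol j
      _ = (c * ‖x‖) ^ 2 := by
          rw [mul_pow, EuclideanSpace.real_norm_sq_eq, mul_sum, mul_sum]
          exact sum_congr rfl fun j _ => by ring
  exact (pow_le_pow_iff_left₀ (norm_nonneg _) (by positivity) two_ne_zero).1 hsq

theorem sum_sum_le_norm_toEuclideanCLM_mul_card (A : Matrix n n ℝ) :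
    ∑ i, ∑ j, A i j ≤ ‖toEuclideanCLM (𝕜 := ℝ) A‖ * Fintype.card n := by
  set T := toEuclideanCLM (𝕜 := ℝ) A
  let v : EuclideanSpace ℝ n := WithLp.toLp 2 fun _ => 1
  have hv : ‖v‖ ^ 2 = Fintype.card n := by simp [v, EuclideanSpace.real_norm_sq_eq]
  calc ∑ i, ∑ j, A i j = inner ℝ v (T v) := by
        rw [inner_toEuclideanCLM]
        simp [v, dotProduct, mulVec]
    _ ≤ ‖v‖ * ‖T v‖ := real_inner_le_norm v (T v)
    _ ≤ ‖v‖ * (‖T‖ * ‖v‖) := by gcongr; exact T.le_opNorm v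
    _ = ‖T‖ * Fintype.card n := by rw [← hv]; ring

theorem norm_toEuclideanCLM_eq_of_sum_eq [Nonempty n] {A : Matrix n n ℝ} {c : ℝ}
    (hA : ∀ i j, 0 ≤ A i j) (hrow : ∀ i, ∑ j, A i j = c) (hcol : ∀ j, ∑ i, A i j = c) :
    ‖toEuclideanCLM (𝕜 := ℝ) A‖ = c := by
  have hc : 0 ≤ c := hrow (Classical.arbitrary n) ▸ sum_nonneg fun j _ => hA _ j
  refine le_antisymm (norm_toEuclideanCLM_le_of_sum_le hc hA (fun i => (hrow i).le)
    fun j => (hcol j).le) (le_of_mul_le_mul_right ?_ (Nat.cast_pos.2 (Fintype.card_pos (α := n))))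
  simpa only [hrow, sum_const, card_univ, nsmul_eq_mul, mul_comm c] using
    sum_sum_le_norm_toEuclideanCLM_mul_card A

end Matrix

lemma periodicBand_nonneg (N b : ℕ) (i j : Fin N) : 0 ≤ periodicBand N b i j := by
  simp only [periodicBand, Matrix.of_apply]
  split_ifs <;> norm_num

lemma strictBand_nonneg (N b : ℕ) (i j : Fin N) : 0 ≤ strictBand N b i j := by
  simp only [strictBand, Matrix.of_apply]
  split_ifs <;> norm_num

lemma periodicBand_isSymm (N b : ℕ) : (periodicBand N b).IsSymm := by
  ext i j
  simp only [Matrix.transpose_apply, periodicBand, Matrix.of_apply]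
  rw [← Int.natAbs_neg, neg_sub]

lemma strictBand_isSymm (N b : ℕ) : (strictBand N b).IsSymm := by
  ext i j
  simp only [Matrix.transpose_apply, strictBand, Matrix.of_apply]
  rw [← Int.natAbs_neg, neg_sub]

lemma strictBand_le_periodicBand (N b : ℕ) (i j : Fin N) :
    strictBand N b i j ≤ periodicBand N b i j := by
  simp only [strictBand, periodicBand, Matrix.of_apply]
  split_ifs with hs hp <;> norm_num
  exact hp ((min_le_left _ _).trans hs)

lemma card_filter_min_sub_le (N b : ℕ) :
    #{k ∈ range N | min k (N - k) ≤ b} = min N (2 * b + 1) := by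
  rcases le_or_gt (2 * b + 1) N with h | h
  · have hsplit : {k ∈ range N | min k (N - k) ≤ b} = range (b + 1) ∪ Ico (N - b) N := by
      ext k; simp only [mem_filter, mem_range, mem_union, mem_Ico]; omega
    rw [hsplit, card_union_of_disjoint (disjoint_left.2 fun k hk hk' => by
      simp only [mem_range, mem_Ico] at hk hk'; omega), card_range, Nat.card_Ico]
    omega
  · rw [filter_true_of_mem fun k hk => by simp only [mem_range] at hk; omega, card_range]
    omega

lemma periodicBand_apply (N b : ℕ) [NeZero N] (i j : Fin N) :
    periodicBand N b i j =
      if min ((j - i : Fin N) : ℕ) (N - ((j - i : Fin N) : ℕ)) ≤ b then 1 else 0 := by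
  simp only [periodicBand, Matrix.of_apply]
  refine if_congr ?_ rfl rfl
  rcases le_or_gt i j with h | h
  · rw [Fin.coe_sub_iff_le.2 h]; omega
  · rw [Fin.coe_sub_iff_lt.2 h]; omega

lemma sum_periodicBand_row (N b : ℕ) (i : Fin N) :
    ∑ j, periodicBand N b i j = min N (2 * b + 1) := by
  rcases Nat.eq_zero_or_pos N with rfl | hN
  · simp
  have : NeZero N := ⟨hN.ne'⟩
  calc ∑ j, periodicBand N b i j
        = ∑ k : Fin N, if min (k : ℕ) (N - k) ≤ b then (1 : ℝ) else 0 :=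
          Fintype.sum_equiv (Equiv.subRight i) _ _ fun j => periodicBand_apply N b i j
    _ = ∑ k ∈ range N, if min k (N - k) ≤ b then (1 : ℝ) else 0 :=
          Fin.sum_univ_eq_sum_range (fun k => if min k (N - k) ≤ b then (1 : ℝ) else 0) N
    _ = min N (2 * b + 1) := by rw [sum_boole, card_filter_min_sub_le]

lemma sum_periodicBand_col (N b : ℕ) (j : Fin N) :
    ∑ i, periodicBand N b i j = min N (2 * b + 1) :=
  (sum_congr rfl fun i _ => (periodicBand_isSymm N b).apply j i).trans
    (sum_periodicBand_row N b j)

theorem opNorm_periodicBand (N b : ℕ) [NeZero N] :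
    opNorm (periodicBand N b) = ((min N (2 * b + 1) : ℕ) : ℝ) :=
  Matrix.norm_toEuclideanCLM_eq_of_sum_eq (periodicBand_nonneg N b) (sum_periodicBand_row N b)
    (sum_periodicBand_col N b)

theorem opNorm_strictBand_le (N b : ℕ) :
    opNorm (strictBand N b) ≤ ((min N (2 * b + 1) : ℕ) : ℝ) := by
  have hrow (i : Fin N) : ∑ j, strictBand N b i j ≤ min N (2 * b + 1) :=
    (sum_le_sum fun j _ => strictBand_le_periodicBand N b i j).trans_eq
      (sum_periodicBand_row N b i)
  exact Matrix.norm_toEuclideanCLM_le_of_sum_le (Nat.cast_nonneg _) (strictBand_nonneg N b)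
    hrow fun j => (sum_congr rfl fun i _ => (strictBand_isSymm N b).apply j i).trans_le (hrow j)

lemma card_filter_natAbs_sub_le {b N : ℕ} (h : b ≤ N) :
    #{k ∈ range N | (((k : ℕ) : ℤ) - N).natAbs ≤ b} = b := by
  rw [show {k ∈ range N | (((k : ℕ) : ℤ) - N).natAbs ≤ b} = Ico (N - b) N by
    ext k; simp only [mem_filter, mem_range, mem_Ico]; omega, Nat.card_Ico]
  omega

lemma sum_range_sum_range_natAbs_sub_le {b N : ℕ} (h : b ≤ N) :
    ∑ i ∈ range N, ∑ j ∈ range N, (if ((i : ℤ) - j).natAbs ≤ b then (1 : ℝ) else 0) =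
      N * (2 * b + 1) - b * (b + 1) := by
  induction N, h using Nat.le_induction with
  | base =>
    rw [sum_congr rfl fun i hi => sum_congr rfl fun j hj => if_pos (by
      simp only [mem_range] at hi hj; omega)]
    simp only [sum_const, card_range, nsmul_eq_mul, mul_one]
    ring
  | succ N hbN ih =>
    have hcol : ∑ i ∈ range N, (if ((i : ℤ) - N).natAbs ≤ b then (1 : ℝ) else 0) = b := by
      rw [sum_boole, card_filter_natAbs_sub_le hbN]
    have hrow : ∑ j ∈ range N, (if ((N : ℤ) - j).natAbs ≤ b then (1 : ℝ) else 0) = b := by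
      simp only [← Int.natAbs_neg ((N : ℤ) - _), neg_sub]
      exact hcol
    simp only [sum_range_succ, sum_add_distrib, ih, hcol, hrow, sub_self, Int.natAbs_zero,
      zero_le, if_true]
    push_cast
    ring

lemma sum_strictBand {N b : ℕ} (h : b ≤ N) :
    ∑ i, ∑ j, strictBand N b i j = N * (2 * b + 1) - b * (b + 1) := by
  rw [← sum_range_sum_range_natAbs_sub_le h, ← Fin.sum_univ_eq_sum_range]
  refine sum_congr rfl fun i _ => ?_
  rw [← Fin.sum_univ_eq_sum_range]
  rfl

lemma bandwidth_mul_one_sub_defect_mul_le {N b : ℕ} (hb : b < N) :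
    ((min N (2 * b + 1) : ℕ) : ℝ) *
        (1 - (if 2 * b + 1 ≤ N then ((min N (2 * b + 1) : ℕ) : ℝ) / (4 * N)
              else (1 - (b : ℝ) / N) ^ 2)) * N ≤ N * (2 * b + 1) - b * (b + 1) := by
  have hN : (0 : ℝ) < N := by exact_mod_cast (Nat.zero_le b).trans_lt hb
  split_ifs with h
  · -- `(2b + 1)² / 4 = b (b + 1) + 1 / 4`
    rw [min_eq_right h]
    push_cast
    field_simp
    nlinarith
  · -- the two sides differ by `N - b`
    rw [min_eq_left (by omega)]
    have hbN : (b : ℝ) < N := by exact_mod_cast hb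
    field_simp
    nlinarith

theorem le_opNorm_strictBand {N b : ℕ} (hb : b < N) :
    ((min N (2 * b + 1) : ℕ) : ℝ) *
        (1 - (if 2 * b + 1 ≤ N then ((min N (2 * b + 1) : ℕ) : ℝ) / (4 * N)
              else (1 - (b : ℝ) / N) ^ 2)) ≤ opNorm (strictBand N b) := by
  have hN : (0 : ℝ) < N := by exact_mod_cast (Nat.zero_le b).trans_lt hb
  refine le_of_mul_le_mul_right ?_ hN
  calc _ ≤ (N * (2 * b + 1) - b * (b + 1) : ℝ) := bandwidth_mul_one_sub_defect_mul_le hb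
    _ = ∑ i, ∑ j, strictBand N b i j := (sum_strictBand hb.le).symm
    _ ≤ opNorm (strictBand N b) * N := by
        simpa only [opNorm, Fintype.card_fin] using
          Matrix.sum_sum_le_norm_toEuclideanCLM_mul_card (strictBand N b)

/-- Operator norms of the band prototypes: `‖P_N‖_op = w_N` and
`w_N (1 - δ_N) ≤ ‖B_N‖_op ≤ w_N`, where `δ_N = w_N/(4N)` if `2b+1 ≤ N` and
`δ_N = (1 - b/N)²` otherwise. -/
theorem stmt4 (N b : ℕ) (hb : b < N) :
    opNorm (periodicBand N b) = ((min N (2 * b + 1) : ℕ) : ℝ) ∧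
    ((min N (2 * b + 1) : ℕ) : ℝ) *
        (1 - (if 2 * b + 1 ≤ N then ((min N (2 * b + 1) : ℕ) : ℝ) / (4 * N)
              else (1 - (b : ℝ) / N) ^ 2)) ≤ opNorm (strictBand N b) ∧
    opNorm (strictBand N b) ≤ ((min N (2 * b + 1) : ℕ) : ℝ) := by
  have : NeZero N := ⟨by omega⟩
  exact ⟨opNorm_periodicBand N b, le_opNorm_strictBand hb, opNorm_strictBand_le N b⟩

end
end

section
/- Let A and R be real symmetric N×N matrices and let ρ and μ denote the eigenvalue distribution measures of A and of B := A + R respectively. Then for every bounded function f ∈ C¹(ℝ) one has |∫f dρ − ∫f dμ| ≤ 2·(rank(R)/N)·‖f'‖_{L¹}. -/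
/-!
Write `B = A + R` and `n_M(x) = #{j | x ≤ λ_j(M)}`. By the fundamental theorem of calculus,
`f(a) - f(b) = ∫ f'(x) (1[x ≤ a] - 1[x ≤ b]) dx`; summing over the eigenvalues gives
`∑_j f(λ_j(A)) - ∑_j f(λ_j(B)) = ∫ f'(x) (n_A(x) - n_B(x)) dx`, so it is enough to show
`|n_A(x) - n_B(x)| ≤ rank R` for every `x`. This is an interlacing estimate: the quadratic form of
`A` is `≥ x‖v‖²` on the span of the eigenvectors of `A` with eigenvalue `≥ x`, that of `B` is
`< x‖v‖²` on the nonzero vectors of the span of the eigenvectors of `B` with eigenvalue `< x`, and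
the two forms agree on `ker R`. These three subspaces therefore meet only in `0`, and counting
dimensions gives `n_A(x) ≤ n_B(x) + rank R`; the other inequality follows by symmetry.
-/

open MeasureTheory ProbabilityTheory Filter Topology
open scoped ENNReal NNReal

noncomputable section

/-- The eigenvalue distribution measure of a real symmetric `N × N` matrix:
`(1/N) * Σ_j δ_{λ_j}`. -/
def evMeasure {N : ℕ} (A : Matrix (Fin N) (Fin N) ℝ) : Measure ℝ :=
  if hA : A.IsHermitian then
    (N : ℝ≥0∞)⁻¹ • ∑ j : Fin N, Measure.dirac (hA.eigenvalues j)
  else 0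

open Finset Module Submodule
open scoped InnerProductSpace

section LinearAlgebra

variable {ι K V V' : Type*} [DivisionRing K] [AddCommGroup V] [Module K V]
  [AddCommGroup V'] [Module K V']

theorem Module.Basis.finrank_span_image (b : Basis ι K V) (s : Finset ι) :
    finrank K (span K (b '' s)) = #s := by
  have hrange : Set.range (b ∘ ((↑) : s → ι)) = b '' s := by
    rw [Set.range_comp, Subtype.range_coe]
  rw [← hrange, finrank_span_eq_card (b.linearIndependent.comp _ Subtype.val_injective),
    Fintype.card_coe]

theorem Submodule.finrank_add_finrank_le_of_disjoint_inf_ker [FiniteDimensional K V]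
    {P W : Submodule K V} (L : V →ₗ[K] V') (h : Disjoint (P ⊓ LinearMap.ker L) W) :
    finrank K P + finrank K W ≤ finrank K V + finrank K (LinearMap.range L) := by
  have hPW := finrank_add_finrank_le_of_disjoint h
  have hPK := finrank_sup_add_finrank_inf_eq P (LinearMap.ker L)
  have hsup := (P ⊔ LinearMap.ker L).finrank_le
  have hL := L.finrank_range_add_finrank_ker
  omega

end LinearAlgebra

namespace OrthonormalBasis

variable {ι κ E : Type*} [Fintype ι] [Fintype κ] [NormedAddCommGroup E] [InnerProductSpace ℝ E]
  (e : OrthonormalBasis ι ℝ E) {T : E →ₗ[ℝ] E} {μ : ι → ℝ}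

theorem repr_eq_zero_of_mem_span_image {s : Set ι} {v : E} (hv : v ∈ span ℝ (e '' s)) {j : ι}
    (hj : j ∉ s) : e.repr v j = 0 := by
  rw [← e.coe_toBasis_repr_apply]
  exact Finsupp.notMem_support_iff.1 fun h => hj (e.toBasis.mem_span_image.1 hv h)

theorem repr_apply_of_apply_eq_smul (he : ∀ i, T (e i) = μ i • e i) (v : E) (j : ι) :
    e.repr (T v) j = μ j * e.repr v j := by
  classical
  conv_lhs => rw [← e.sum_repr v]
  simp [he, smul_smul, OrthonormalBasis.repr_self, Pi.single_apply, mul_comm]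

theorem inner_apply_self_eq_sum (he : ∀ i, T (e i) = μ i • e i) (v : E) :
    ⟪v, T v⟫_ℝ = ∑ j, μ j * e.repr v j ^ 2 := by
  rw [← e.repr.inner_map_map, EuclideanSpace.inner_eq_star_dotProduct, dotProduct]
  refine sum_congr rfl fun j _ => ?_
  rw [e.repr_apply_of_apply_eq_smul he, star_trivial]
  ring

theorem norm_sq_eq_sum (v : E) : ‖v‖ ^ 2 = ∑ j, e.repr v j ^ 2 := by
  rw [← e.repr.norm_map, EuclideanSpace.norm_sq_eq]
  simp

theorem mul_norm_sq_le_inner_apply_self (he : ∀ i, T (e i) = μ i • e i) {x : ℝ} {v : E}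
    (hv : v ∈ span ℝ (e '' {i | x ≤ μ i})) : x * ‖v‖ ^ 2 ≤ ⟪v, T v⟫_ℝ := by
  rw [e.inner_apply_self_eq_sum he, e.norm_sq_eq_sum, mul_sum]
  refine sum_le_sum fun j _ => ?_
  by_cases hj : x ≤ μ j
  · exact mul_le_mul_of_nonneg_right hj (sq_nonneg _)
  · simp [e.repr_eq_zero_of_mem_span_image hv hj]

theorem inner_apply_self_lt_mul_norm_sq (he : ∀ i, T (e i) = μ i • e i) {x : ℝ} {v : E}
    (hv : v ∈ span ℝ (e '' {i | μ i < x})) (hv0 : v ≠ 0) : ⟪v, T v⟫_ℝ < x * ‖v‖ ^ 2 := by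
  have hzero : ∀ j, ¬ μ j < x → e.repr v j = 0 := fun j hj =>
    e.repr_eq_zero_of_mem_span_image hv hj
  obtain ⟨j₀, hj₀⟩ : ∃ j, e.repr v j ≠ 0 := by
    by_contra! h
    exact hv0 (e.repr.map_eq_zero_iff.1 (by ext j; exact h j))
  rw [e.inner_apply_self_eq_sum he, e.norm_sq_eq_sum, mul_sum]
  refine sum_lt_sum (fun j _ => ?_) ⟨j₀, mem_univ _, ?_⟩
  · by_cases hj : μ j < x
    · exact mul_le_mul_of_nonneg_right hj.le (sq_nonneg _)
    · simp [hzero j hj]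
  · have hlt : μ j₀ < x := by_contra fun h => hj₀ (hzero j₀ h)
    exact mul_lt_mul_of_pos_right hlt (by positivity)

theorem card_le_card_add_finrank_range_sub (f : OrthonormalBasis κ ℝ E) {S : E →ₗ[ℝ] E}
    {ν : κ → ℝ} (he : ∀ i, T (e i) = μ i • e i) (hf : ∀ k, S (f k) = ν k • f k) (x : ℝ) :
    #{i | x ≤ μ i} ≤ #{k | x ≤ ν k} + finrank ℝ (LinearMap.range (S - T)) := by
  set P := span ℝ (e '' {i | x ≤ μ i})
  set W := span ℝ (f '' {k | ν k < x})
  have hdisj : Disjoint (P ⊓ LinearMap.ker (S - T)) W := by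
    refine disjoint_def.2 fun v ⟨hvP, hvK⟩ hvW => by_contra fun hv0 => ?_
    have hST : S v = T v := sub_eq_zero.1 (LinearMap.mem_ker.1 hvK)
    have hlt := f.inner_apply_self_lt_mul_norm_sq hf hvW hv0
    rw [hST] at hlt
    exact (e.mul_norm_sq_le_inner_apply_self he hvP).not_gt hlt
  have := e.toBasis.finiteDimensional_of_finite
  have hdim := finrank_add_finrank_le_of_disjoint_inf_ker (S - T) hdisj
  have hP : finrank ℝ P = #{i | x ≤ μ i} := by
    rw [← e.toBasis.finrank_span_image, e.coe_toBasis, coe_filter_univ]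
  have hW : finrank ℝ W = #{k | ν k < x} := by
    rw [← f.toBasis.finrank_span_image, f.coe_toBasis, coe_filter_univ]
  have hE : finrank ℝ E = #{k | x ≤ ν k} + #{k | ν k < x} := by
    simp_rw [← not_le, card_filter_add_card_filter_not, card_univ, finrank_eq_card_basis f.toBasis]
  omega

theorem abs_card_sub_card_le_finrank_range_sub (f : OrthonormalBasis κ ℝ E) {S : E →ₗ[ℝ] E}
    {ν : κ → ℝ} (he : ∀ i, T (e i) = μ i • e i) (hf : ∀ k, S (f k) = ν k • f k) (x : ℝ) :
    |(#{i | x ≤ μ i} : ℝ) - #{k | x ≤ ν k}| ≤ finrank ℝ (LinearMap.range (S - T)) := by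
  have h₁ := e.card_le_card_add_finrank_range_sub f he hf x
  have h₂ := f.card_le_card_add_finrank_range_sub e hf he x
  rw [← neg_sub, LinearMap.range_neg] at h₂
  rw [abs_sub_le_iff, sub_le_iff_le_add', sub_le_iff_le_add']
  exact ⟨by exact_mod_cast h₁, by exact_mod_cast h₂⟩

end OrthonormalBasis

namespace Matrix

variable {m n R : Type*} [Fintype m] [Fintype n] [DecidableEq n] [CommRing R]

theorem finrank_range_toLpLin (p q : ENNReal) (M : Matrix m n R) :
    finrank R (toLpLin p q M).range = M.rank :=
  (rank_eq_finrank_range_toLin M (PiLp.basisFun q R m) (PiLp.basisFun p R n)).symm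

theorem IsHermitian.toLpLin_eigenvectorBasis {A : Matrix n n ℝ} (hA : A.IsHermitian) (j : n) :
    toLpLin 2 2 A (hA.eigenvectorBasis j) = hA.eigenvalues j • hA.eigenvectorBasis j := by
  ext i
  exact congrFun (hA.mulVec_eigenvectorBasis j) i

theorem IsHermitian.abs_card_sub_card_add_le_rank {A B : Matrix n n ℝ} (hA : A.IsHermitian)
    (hB : B.IsHermitian) (x : ℝ) :
    |(#{i | x ≤ hA.eigenvalues i} : ℝ) - #{i | x ≤ (hA.add hB).eigenvalues i}| ≤ B.rank := by
  have h := hA.eigenvectorBasis.abs_card_sub_card_le_finrank_range_sub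
    (hA.add hB).eigenvectorBasis hA.toLpLin_eigenvectorBasis
    (hA.add hB).toLpLin_eigenvectorBasis x
  rwa [map_add, add_sub_cancel_left, finrank_range_toLpLin] at h

end Matrix

section CountingFunction

open Set

variable {ι : Type*} [Fintype ι] {f f' : ℝ → ℝ}

theorem sub_eq_integral_indicator_Iic_sub (hf : ∀ x, HasDerivAt f (f' x) x)
    (hf' : Integrable f') (a b : ℝ) :
    f a - f b = ∫ x, ((Iic a).indicator f' x - (Iic b).indicator f' x) := by
  rw [integral_sub (hf'.indicator measurableSet_Iic) (hf'.indicator measurableSet_Iic),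
    integral_indicator measurableSet_Iic, integral_indicator measurableSet_Iic,
    intervalIntegral.integral_Iic_sub_Iic hf'.integrableOn hf'.integrableOn,
    intervalIntegral.integral_eq_sub_of_hasDerivAt (fun x _ => hf x) hf'.intervalIntegrable]

theorem sum_indicator_Iic_apply (α : ι → ℝ) (x : ℝ) :
    ∑ i, (Iic (α i)).indicator f' x = #{i | x ≤ α i} * f' x := by
  simp only [indicator_apply, Set.mem_Iic, ← sum_filter, sum_const, nsmul_eq_mul]

theorem sum_sub_sum_eq_integral_mul_card_sub_card (hf : ∀ x, HasDerivAt f (f' x) x)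
    (hf' : Integrable f') (α β : ι → ℝ) :
    ∑ i, f (α i) - ∑ i, f (β i) =
      ∫ x, f' x * ((#{i | x ≤ α i} : ℝ) - #{i | x ≤ β i}) := by
  have hint : ∀ a : ℝ, Integrable ((Iic a).indicator f') := fun _ =>
    hf'.indicator measurableSet_Iic
  calc ∑ i, f (α i) - ∑ i, f (β i)
      = ∑ i, ∫ x, ((Iic (α i)).indicator f' x - (Iic (β i)).indicator f' x) := by
        rw [← sum_sub_distrib]
        exact sum_congr rfl fun i _ => sub_eq_integral_indicator_Iic_sub hf hf' _ _
    _ = ∫ x, ∑ i, ((Iic (α i)).indicator f' x - (Iic (β i)).indicator f' x) :=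
        (integral_finsetSum _ fun i _ => (hint _).sub (hint _)).symm
    _ = ∫ x, f' x * ((#{i | x ≤ α i} : ℝ) - #{i | x ≤ β i}) := by
        congr 1 with x
        rw [sum_sub_distrib, sum_indicator_Iic_apply, sum_indicator_Iic_apply]
        ring

theorem abs_sum_sub_sum_le_mul_integral_abs (hf : ∀ x, HasDerivAt f (f' x) x)
    (hf' : Integrable f') {α β : ι → ℝ} {K : ℝ}
    (hK : ∀ x, |(#{i | x ≤ α i} : ℝ) - #{i | x ≤ β i}| ≤ K) :
    |∑ i, f (α i) - ∑ i, f (β i)| ≤ K * ∫ x, |f' x| := by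
  rw [sum_sub_sum_eq_integral_mul_card_sub_card hf hf', ← integral_const_mul]
  refine (abs_integral_le_integral_abs).trans <| integral_mono_of_nonneg
    (.of_forall fun _ => abs_nonneg _) (hf'.abs.const_mul K) (.of_forall fun x => ?_)
  dsimp only
  rw [abs_mul, mul_comm K]
  exact mul_le_mul_of_nonneg_left (hK x) (abs_nonneg _)

end CountingFunction

theorem integral_evMeasure {N : ℕ} {A : Matrix (Fin N) (Fin N) ℝ} (hA : A.IsHermitian)
    (f : ℝ → ℝ) : ∫ x, f x ∂evMeasure A = (N : ℝ)⁻¹ * ∑ j, f (hA.eigenvalues j) := by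
  rw [evMeasure, dif_pos hA, integral_smul_measure,
    integral_finsetSum_measure fun j _ => integrable_dirac (by simp)]
  simp [integral_dirac]

theorem stmt8_general {N : ℕ} (A R : Matrix (Fin N) (Fin N) ℝ)
    (hA : A.IsHermitian) (hR : R.IsHermitian)
    (f : ℝ → ℝ) (hf : ContDiff ℝ 1 f)
    (hf' : Integrable (deriv f)) :
    |(∫ x, f x ∂(evMeasure A)) - ∫ x, f x ∂(evMeasure (A + R))| ≤
      2 * ((R.rank : ℝ) / N) * ∫ x, |deriv f x| := by
  have hsum := abs_sum_sub_sum_le_mul_integral_abs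
    (fun x => (hf.differentiable one_ne_zero x).hasDerivAt) hf'
    (hA.abs_card_sub_card_add_le_rank hR)
  rw [integral_evMeasure hA, integral_evMeasure (hA.add hR), ← mul_sub, abs_mul, abs_inv,
    Nat.abs_cast]
  calc (N : ℝ)⁻¹ * |_| ≤ (N : ℝ)⁻¹ * (R.rank * ∫ x, |deriv f x|) := by gcongr
    _ = 1 * ((R.rank : ℝ) / N) * ∫ x, |deriv f x| := by ring
    _ ≤ 2 * ((R.rank : ℝ) / N) * ∫ x, |deriv f x| := by gcongr; norm_num

/-- For real symmetric `A`, `R` and any bounded `C¹` function `f` with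
integrable derivative, the eigenvalue distribution measures `ρ` of `A` and `μ` of `A + R`
satisfy `|∫f dρ - ∫f dμ| ≤ 2 (rank R / N) ‖f'‖_{L¹}`. -/
theorem stmt8 {N : ℕ} (A R : Matrix (Fin N) (Fin N) ℝ)
    (hA : A.IsHermitian) (hR : R.IsHermitian)
    (f : ℝ → ℝ) (hf : ContDiff ℝ 1 f) (hfb : ∃ D, ∀ x, |f x| ≤ D)
    (hf' : Integrable (deriv f)) :
    |(∫ x, f x ∂(evMeasure A)) - ∫ x, f x ∂(evMeasure (A + R))| ≤
      2 * ((R.rank : ℝ) / N) * ∫ x, |deriv f x| :=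
  stmt8_general A R hA hR f hf hf'
end
end

section
/- Let (Ω,F,P) be a probability space, let μ_N^ω and ρ_N^ω (ω ∈ Ω, N ∈ ℕ) be probability measures on ℝ, and let μ be a probability measure on ℝ. Assume (ρ_N^ω)_N converges weakly in probability to μ, and suppose there is a real sequence (c_N)_N with c_N → 0 such that for all ω ∈ Ω and all f in S := {f ∈ C¹(ℝ) : ‖f'‖_{L¹} + ‖f'‖_{L∞} < ∞} one has |∫f dρ_N^ω − ∫f dμ_N^ω| ≤ c_N·(‖f'‖_{L¹} + ‖f'‖_{L∞}). Then (μ_N^ω)_N also converges weakly in probability to μ. -/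
/-! Fix a bounded continuous `f` and `ε > 0`. Since `μ` is tight, there is a `C¹` bump `b`, equal
to `1` on a large ball, with `∫ b dμ` close to `1`; by Weierstrass there is a compactly supported
`C¹` function `g = b · p` with `|f - g| ≤ ε/8 + ‖f‖ (1 - b)`. Both `b` and `g` lie in `S`, so their
integrals against `ρ_N^ω` and `μ_N^ω` differ by `O(c_N)`, uniformly in `ω`. Passing from
`∫ f dμ_N^ω` to `∫ f dμ` through `g` and `ρ_N^ω`, the mass that `μ_N^ω` and `ρ_N^ω` put where
`b < 1` is controlled by `∫ b dμ`, and the only random errors left are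
`∫ f dρ_N^ω - ∫ f dμ` and `∫ b dρ_N^ω - ∫ b dμ`, which tend to `0` in probability. -/

open MeasureTheory Filter Topology Metric
open scoped BoundedContinuousFunction

section ConvergenceInProbability

variable {Ω : Type*} [MeasurableSpace Ω]

def TendstoZeroInProbability (P : Measure Ω) (X : ℕ → Ω → ℝ) : Prop :=
  ∀ ε > (0 : ℝ), Tendsto (fun N => P {ω | ε < |X N ω|}) atTop (𝓝 0)

namespace TendstoZeroInProbability

variable {P : Measure Ω} {X Y : ℕ → Ω → ℝ}

lemma abs (hX : TendstoZeroInProbability P X) :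
    TendstoZeroInProbability P fun N ω => |X N ω| := by
  simpa only [TendstoZeroInProbability, abs_abs] using hX

lemma add (hX : TendstoZeroInProbability P X) (hY : TendstoZeroInProbability P Y) :
    TendstoZeroInProbability P fun N ω => X N ω + Y N ω := by
  intro ε hε
  have hsum := (hX _ (half_pos hε)).add (hY _ (half_pos hε))
  rw [add_zero] at hsum
  refine tendsto_of_tendsto_of_tendsto_of_le_of_le tendsto_const_nhds hsum (fun _ => zero_le)
    fun N => (measure_mono fun ω hω => ?_).trans (measure_union_le _ _)
  simp only [Set.mem_ofPred_eq, Set.mem_union] at hω ⊢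
  by_contra! h
  linarith [abs_add_le (X N ω) (Y N ω)]

lemma const_mul (hX : TendstoZeroInProbability P X) (K : ℝ) :
    TendstoZeroInProbability P fun N ω => K * X N ω := by
  intro ε hε
  refine tendsto_of_tendsto_of_tendsto_of_le_of_le tendsto_const_nhds
    (hX (ε / (|K| + 1)) (by positivity)) (fun _ => zero_le) fun N => measure_mono fun ω hω => ?_
  simp only [Set.mem_ofPred_eq, abs_mul] at hω ⊢
  rw [div_lt_iff₀ (by positivity)]
  nlinarith [abs_nonneg (X N ω)]

lemma of_forall_abs_le_add
    (h : ∀ ε > (0 : ℝ), ∃ Y : ℕ → Ω → ℝ, TendstoZeroInProbability P Y ∧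
      ∀ᶠ N in atTop, ∀ ω, |X N ω| ≤ ε + Y N ω) :
    TendstoZeroInProbability P X := by
  intro δ hδ
  obtain ⟨Y, hY, hXY⟩ := h (δ / 2) (half_pos hδ)
  refine tendsto_of_tendsto_of_tendsto_of_le_of_le' tendsto_const_nhds (hY _ (half_pos hδ))
    (.of_forall fun _ => zero_le) ?_
  filter_upwards [hXY] with N hN
  refine measure_mono fun ω hω => ?_
  simp only [Set.mem_ofPred_eq] at hω ⊢
  linarith [hN ω, le_abs_self (Y N ω)]

end TendstoZeroInProbability

end ConvergenceInProbability

lemma HasCompactSupport.integrable_deriv {u : ℝ → ℝ} (hs : HasCompactSupport u)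
    (hu : ContDiff ℝ 1 u) : Integrable (deriv u) :=
  (hu.continuous_deriv le_rfl).integrable_of_hasCompactSupport hs.deriv

lemma HasCompactSupport.bddAbove_abs_deriv {u : ℝ → ℝ} (hs : HasCompactSupport u)
    (hu : ContDiff ℝ 1 u) : BddAbove (Set.range fun x => |deriv u x|) :=
  (hu.continuous_deriv le_rfl).abs.bddAbove_range_of_hasCompactSupport hs.deriv.abs

lemma HasCompactSupport.exists_abs_integral_sub_le {ι : Type*} {ρ ν : ι → Measure ℝ} {c : ι → ℝ}
    {u : ℝ → ℝ} (hs : HasCompactSupport u) (hu : ContDiff ℝ 1 u)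
    (hbound : ∀ i (f : ℝ → ℝ), ContDiff ℝ 1 f → Integrable (deriv f) →
      BddAbove (Set.range fun x => |deriv f x|) →
      |∫ x, f x ∂(ρ i) - ∫ x, f x ∂(ν i)| ≤ c i * ((∫ x, |deriv f x|) + ⨆ x, |deriv f x|)) :
    ∃ K, ∀ i, |∫ x, u x ∂(ρ i) - ∫ x, u x ∂(ν i)| ≤ |c i| * K :=
  ⟨_, fun i => (hbound i u hu (hs.integrable_deriv hu) (hs.bddAbove_abs_deriv hu)).trans
    (mul_le_mul_of_nonneg_right (le_abs_self _) (add_nonneg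
      (integral_nonneg fun _ => abs_nonneg _) (Real.iSup_nonneg fun _ => abs_nonneg _)))⟩

lemma abs_sub_mul_le {y q β s M : ℝ} (hβ₀ : 0 ≤ β) (hβ₁ : β ≤ 1) (hs : 0 ≤ s)
    (hy : |y| ≤ M) (hq : β ≠ 0 → |y - q| ≤ s) : |y - β * q| ≤ s + M * (1 - β) := by
  have hsplit : y - β * q = (1 - β) * y + β * (y - q) := by ring
  have hβq : β * |y - q| ≤ s := by
    rcases eq_or_ne β 0 with hβ | hβ
    · simpa [hβ] using hs
    · nlinarith [hq hβ, abs_nonneg (y - q)]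
  calc |y - β * q| ≤ (1 - β) * |y| + β * |y - q| := by
        rw [hsplit]
        refine (abs_add_le _ _).trans_eq ?_
        rw [abs_mul, abs_mul, abs_of_nonneg (by linarith), abs_of_nonneg hβ₀]
    _ ≤ s + M * (1 - β) := by nlinarith

lemma exists_contDiff_hasCompactSupport_abs_sub_le {f : ℝ → ℝ} (hf : Continuous f) {M : ℝ}
    (hM : ∀ x, |f x| ≤ M) (b : ContDiffBump (0 : ℝ)) {s : ℝ} (hs : 0 < s) :
    ∃ g : ℝ → ℝ, ContDiff ℝ 1 g ∧ HasCompactSupport g ∧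
      ∀ x, |f x - g x| ≤ s + M * (1 - b x) := by
  obtain ⟨p, hp⟩ := exists_polynomial_near_of_continuousOn (-b.rOut) b.rOut f hf.continuousOn s hs
  have hp_smooth : ContDiff ℝ 1 fun x => p.eval x := by simpa using p.contDiff_aeval (𝕜 := ℝ) 1
  refine ⟨fun x => b x * p.eval x, b.contDiff.mul hp_smooth, b.hasCompactSupport.mul_right,
    fun x => abs_sub_mul_le b.nonneg b.le_one hs.le (hM x) fun hbx => ?_⟩
  have hx : x ∈ ball (0 : ℝ) b.rOut := b.support_eq ▸ hbx
  rw [abs_sub_comm]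
  exact (hp x (Set.mem_Icc.mpr (abs_le.mp (by simpa using (mem_ball_zero_iff.mp hx).le)))).le

lemma one_sub_integral_contDiffBump_le {E : Type*} [NormedAddCommGroup E] [NormedSpace ℝ E]
    [FiniteDimensional ℝ E] [HasContDiffBump E] [MeasurableSpace E]
    [OpensMeasurableSpace E] {ν : Measure E} [IsProbabilityMeasure ν] {c : E} (b : ContDiffBump c) :
    1 - ∫ x, b x ∂ν ≤ ν.real (closedBall c b.rIn)ᶜ := by
  have hb : Integrable (⇑b) ν := b.continuous.integrable_of_hasCompactSupport b.hasCompactSupport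
  have hpt : ∀ x, 1 - b x ≤ (closedBall c b.rIn)ᶜ.indicator 1 x := fun x => by
    by_cases hx : x ∈ closedBall c b.rIn
    · simp [b.one_of_mem_closedBall hx, hx]
    · simp [hx, b.nonneg]
  calc 1 - ∫ x, b x ∂ν = ∫ x, 1 - b x ∂ν := by rw [integral_sub (integrable_const 1) hb]; simp
    _ ≤ ∫ x, (closedBall c b.rIn)ᶜ.indicator 1 x ∂ν :=
      integral_mono (by fun_prop)
        ((integrable_const 1).indicator measurableSet_closedBall.compl) hpt
    _ = ν.real (closedBall c b.rIn)ᶜ := integral_indicator_one measurableSet_closedBall.compl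

lemma abs_integral_sub_le_of_abs_sub_le {α : Type*} [MeasurableSpace α] {ν : Measure α}
    [IsProbabilityMeasure ν] {f g χ : α → ℝ} (hf : Integrable f ν) (hg : Integrable g ν)
    (hχ : Integrable χ ν) {s C : ℝ}
    (hfg : ∀ x, |f x - g x| ≤ s + C * (1 - χ x)) :
    |∫ x, f x ∂ν - ∫ x, g x ∂ν| ≤ s + C * (1 - ∫ x, χ x ∂ν) := by
  calc |∫ x, f x ∂ν - ∫ x, g x ∂ν| = |∫ x, f x - g x ∂ν| := by rw [integral_sub hf hg]
    _ ≤ ∫ x, |f x - g x| ∂ν := abs_integral_le_integral_abs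
    _ ≤ ∫ x, s + C * (1 - χ x) ∂ν := integral_mono (hf.sub hg).abs (by fun_prop) hfg
    _ = s + C * (1 - ∫ x, χ x ∂ν) := by
      rw [integral_add (integrable_const s) (by fun_prop), integral_const_mul,
        integral_sub (integrable_const 1) hχ]
      simp

lemma exists_contDiffBump_one_sub_integral_le (μ : Measure ℝ) [IsProbabilityMeasure μ] {η : ℝ}
    (hη : 0 < η) : ∃ b : ContDiffBump (0 : ℝ), 1 - ∫ x, b x ∂μ ≤ η := by
  have htail := tendsto_measure_compl_closedBall_of_isTightMeasureSet
    (isTightMeasureSet_singleton (μ := μ)) (0 : ℝ)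
  simp only [iSup_singleton] at htail
  obtain ⟨R, hRμ, hR⟩ := ((htail.eventually (gt_mem_nhds (ENNReal.ofReal_pos.2 hη))).and
    (eventually_gt_atTop 0)).exists
  refine ⟨⟨R, R + 1, hR, by linarith⟩, (one_sub_integral_contDiffBump_le _).trans ?_⟩
  exact ENNReal.toReal_le_of_le_ofReal hη.le hRμ.le

lemma abs_integral_sub_le_of_approx {ν ρ μ : Measure ℝ} [IsProbabilityMeasure ν]
    [IsProbabilityMeasure ρ] [IsProbabilityMeasure μ] (f : ℝ →ᵇ ℝ) {g : ℝ → ℝ}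
    (hg : Continuous g) (hgs : HasCompactSupport g) (b : ContDiffBump (0 : ℝ)) {s : ℝ}
    (hfg : ∀ x, |f x - g x| ≤ s + ‖f‖ * (1 - b x)) :
    |∫ x, f x ∂ν - ∫ x, f x ∂μ| ≤
      2 * s + ‖f‖ * (2 * (1 - ∫ x, b x ∂μ) + 2 * |∫ x, b x ∂ρ - ∫ x, b x ∂μ|
        + |∫ x, b x ∂ρ - ∫ x, b x ∂ν|)
      + |∫ x, g x ∂ρ - ∫ x, g x ∂ν| + |∫ x, f x ∂ρ - ∫ x, f x ∂μ| := by
  have hν := abs_integral_sub_le_of_abs_sub_le (f.integrable ν)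
    (hg.integrable_of_hasCompactSupport hgs)
    (b.continuous.integrable_of_hasCompactSupport b.hasCompactSupport) hfg
  have hρ := abs_integral_sub_le_of_abs_sub_le (f.integrable ρ)
    (hg.integrable_of_hasCompactSupport hgs)
    (b.continuous.integrable_of_hasCompactSupport b.hasCompactSupport) hfg
  have hbρ : 1 - ∫ x, b x ∂ρ ≤ (1 - ∫ x, b x ∂μ) + |∫ x, b x ∂ρ - ∫ x, b x ∂μ| := by
    linarith [neg_abs_le (∫ x, b x ∂ρ - ∫ x, b x ∂μ)]
  have hbν : 1 - ∫ x, b x ∂ν ≤ (1 - ∫ x, b x ∂μ) + |∫ x, b x ∂ρ - ∫ x, b x ∂μ|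
      + |∫ x, b x ∂ρ - ∫ x, b x ∂ν| := by
    linarith [le_abs_self (∫ x, b x ∂ρ - ∫ x, b x ∂ν)]
  have := mul_le_mul_of_nonneg_left hbρ (norm_nonneg f)
  have := mul_le_mul_of_nonneg_left hbν (norm_nonneg f)
  have htri : |∫ x, f x ∂ν - ∫ x, f x ∂μ| ≤ |∫ x, f x ∂ν - ∫ x, g x ∂ν|
      + |∫ x, g x ∂ρ - ∫ x, g x ∂ν| + |∫ x, f x ∂ρ - ∫ x, g x ∂ρ|
      + |∫ x, f x ∂ρ - ∫ x, f x ∂μ| := by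
    rw [abs_sub_comm (∫ x, g x ∂ρ), abs_sub_comm (∫ x, f x ∂ρ) (∫ x, g x ∂ρ)]
    linarith [abs_sub_le (∫ x, f x ∂ν) (∫ x, g x ∂ν) (∫ x, f x ∂μ),
      abs_sub_le (∫ x, g x ∂ν) (∫ x, g x ∂ρ) (∫ x, f x ∂μ),
      abs_sub_le (∫ x, g x ∂ρ) (∫ x, f x ∂ρ) (∫ x, f x ∂μ)]
  linarith

theorem stmt9_general {Ω : Type*} [MeasurableSpace Ω] (P : Measure Ω)
    (μN ρN : ℕ → Ω → Measure ℝ) (μ : Measure ℝ)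
    (hμN : ∀ N ω, IsProbabilityMeasure (μN N ω))
    (hρN : ∀ N ω, IsProbabilityMeasure (ρN N ω))
    (hμ : IsProbabilityMeasure μ)
    (hconv : ∀ f : BoundedContinuousFunction ℝ ℝ, ∀ ε > (0 : ℝ),
      Tendsto (fun N : ℕ =>
        P {ω | ε < |(∫ x, f x ∂(ρN N ω)) - ∫ x, f x ∂μ|}) atTop (𝓝 0))
    (c : ℕ → ℝ) (hc : Tendsto c atTop (𝓝 0))
    (hbound : ∀ (N : ℕ) (ω : Ω) (f : ℝ → ℝ), ContDiff ℝ 1 f →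
      Integrable (deriv f) → BddAbove (Set.range fun x => |deriv f x|) →
      |(∫ x, f x ∂(ρN N ω)) - ∫ x, f x ∂(μN N ω)| ≤
        c N * ((∫ x, |deriv f x|) + ⨆ x, |deriv f x|)) :
    ∀ f : BoundedContinuousFunction ℝ ℝ, ∀ ε > (0 : ℝ),
      Tendsto (fun N : ℕ =>
        P {ω | ε < |(∫ x, f x ∂(μN N ω)) - ∫ x, f x ∂μ|}) atTop (𝓝 0) := by
  intro f
  have hρ : ∀ u : ℝ →ᵇ ℝ,
      TendstoZeroInProbability P fun N ω => ∫ x, u x ∂(ρN N ω) - ∫ x, u x ∂μ := hconv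
  refine TendstoZeroInProbability.of_forall_abs_le_add fun ε hε => ?_
  obtain ⟨b, hbμ⟩ := exists_contDiffBump_one_sub_integral_le μ
    (η := ε / (8 * (‖f‖ + 1))) (by positivity)
  obtain ⟨g, hg, hgs, hfg⟩ := exists_contDiff_hasCompactSupport_abs_sub_le f.continuous
    (fun x => f.norm_coe_le_norm x) b (s := ε / 8) (by positivity)
  have hbound' := fun i : ℕ × Ω => hbound i.1 i.2
  obtain ⟨Kb, hKb⟩ := b.hasCompactSupport.exists_abs_integral_sub_le b.contDiff hbound'
  obtain ⟨Kg, hKg⟩ := hgs.exists_abs_integral_sub_le hg hbound'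
  let bBCF : ℝ →ᵇ ℝ := .ofNormedAddCommGroup b b.continuous 1 fun x => by
    rw [Real.norm_eq_abs, abs_of_nonneg b.nonneg]; exact b.le_one
  refine ⟨fun N ω => |∫ x, f x ∂(ρN N ω) - ∫ x, f x ∂μ|
      + 2 * ‖f‖ * |∫ x, b x ∂(ρN N ω) - ∫ x, b x ∂μ|,
    (hρ f).abs.add ((hρ bBCF).abs.const_mul (2 * ‖f‖)), ?_⟩
  have hfb : ‖f‖ * (1 - ∫ x, b x ∂μ) ≤ ε / 8 := by
    refine (mul_le_mul_of_nonneg_left hbμ (norm_nonneg f)).trans ?_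
    rw [mul_div_assoc', div_le_div_iff₀ (by positivity) (by norm_num)]
    nlinarith [norm_nonneg f]
  have hcN : ∀ᶠ N in atTop, |c N| * (‖f‖ * Kb + Kg) ≤ ε / 4 := by
    have hc' : Tendsto (fun N => |c N| * (‖f‖ * Kb + Kg)) atTop (𝓝 0) := by
      simpa using hc.abs.mul_const (‖f‖ * Kb + Kg)
    exact hc'.eventually (ge_mem_nhds (by positivity))
  filter_upwards [hcN] with N hN ω
  have := hμN N ω
  have := hρN N ω
  have hcore := abs_integral_sub_le_of_approx (ν := μN N ω) (ρ := ρN N ω) (μ := μ) f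
    hg.continuous hgs b hfg
  have hbN := mul_le_mul_of_nonneg_left (hKb (N, ω)) (norm_nonneg f)
  linarith [hKg (N, ω)]

/-- Persistence of weak convergence in probability: if `ρ_N^ω → μ` weakly
in probability and `|∫f dρ_N^ω - ∫f dμ_N^ω| ≤ c_N (‖f'‖_{L¹} + ‖f'‖_∞)` for all `ω` and all
`f ∈ S = {f ∈ C¹ : ‖f'‖_{L¹} + ‖f'‖_∞ < ∞}`, with `c_N → 0`, then also `μ_N^ω → μ` weakly
in probability. -/
theorem stmt9 {Ω : Type*} [MeasurableSpace Ω] (P : Measure Ω) [IsProbabilityMeasure P]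
    (μN ρN : ℕ → Ω → Measure ℝ) (μ : Measure ℝ)
    (hμN : ∀ N ω, IsProbabilityMeasure (μN N ω))
    (hρN : ∀ N ω, IsProbabilityMeasure (ρN N ω))
    (hμ : IsProbabilityMeasure μ)
    (hconv : ∀ f : BoundedContinuousFunction ℝ ℝ, ∀ ε > (0 : ℝ),
      Tendsto (fun N : ℕ =>
        P {ω | ε < |(∫ x, f x ∂(ρN N ω)) - ∫ x, f x ∂μ|}) atTop (𝓝 0))
    (c : ℕ → ℝ) (hc : Tendsto c atTop (𝓝 0))
    (hbound : ∀ (N : ℕ) (ω : Ω) (f : ℝ → ℝ), ContDiff ℝ 1 f →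
      Integrable (deriv f) → BddAbove (Set.range fun x => |deriv f x|) →
      |(∫ x, f x ∂(ρN N ω)) - ∫ x, f x ∂(μN N ω)| ≤
        c N * ((∫ x, |deriv f x|) + ⨆ x, |deriv f x|)) :
    ∀ f : BoundedContinuousFunction ℝ ℝ, ∀ ε > (0 : ℝ),
      Tendsto (fun N : ℕ =>
        P {ω | ε < |(∫ x, f x ∂(μN N ω)) - ∫ x, f x ∂μ|}) atTop (𝓝 0) :=
  stmt9_general P μN ρN μ hμN hρN hμ hconv c hc hbound
end

section
/- Let (ξ_i)_{i∈ℕ} be an exchangeable sequence of real-valued random variables on a probability space (Ω,F,P) with E(|ξ_1|^p) < ∞ for all p > 0. Then the sequence of averages M_n := (1/n)·Σ_{i=1}^n ξ_i converges P-almost surely to a real-valued random variable M. -/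
open MeasureTheory ProbabilityTheory Filter Topology
open scoped ENNReal

/-!
Exchangeability makes all mixed moments `E[ξ_i ξ_j]`, `i ≠ j`, equal to `E[ξ_0 ξ_1]`, so for
weights `c` with `∑ c_i = 0` one has `E[(∑ c_i ξ_i)²] = (E[ξ_0²] - E[ξ_0 ξ_1]) ∑ c_i²`. For the
averages this gives `‖M_m - M_n‖₂² ≤ C / m` when `m ≤ n`, so along `n_k = (k+1)⁴` the L² norms of
the increments are summable and `M_{n_k}` converges almost surely. If the `ξ_i` are nonnegative,
the partial sums are monotone and consecutive `n_k` have ratio tending to `1`, which controls `M_n`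
between them. In general `ξ_i = ξ_i⁺ - ξ_i⁻`, and both parts are again exchangeable.
-/

def Exchangeable {Ω : Type*} [MeasurableSpace Ω] (P : Measure Ω) (ξ : ℕ → Ω → ℝ) : Prop :=
  ∀ (n : ℕ) (π : Equiv.Perm (Fin n)),
    Measure.map (fun ω (i : Fin n) => ξ (π i).val ω) P =
    Measure.map (fun ω (i : Fin n) => ξ i.val ω) P

section

variable {Ω : Type*} [MeasurableSpace Ω] {P : Measure Ω}

theorem eLpNorm_two_eq_ofReal_sqrt_integral_sq {f : Ω → ℝ} (hf : MemLp f 2 P) :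
    eLpNorm f 2 P = ENNReal.ofReal √(∫ ω, f ω ^ 2 ∂P) := by
  rw [← ofReal_lpNorm hf, lpNorm_eq_integral_norm_rpow_toReal two_ne_zero ENNReal.ofNat_ne_top
    hf.aestronglyMeasurable, Real.sqrt_eq_rpow]
  simp

theorem ae_exists_tendsto_of_tsum_eLpNorm_sub_ne_top {E : Type*} [NormedAddCommGroup E]
    [CompleteSpace E] {Y : ℕ → Ω → E} (hY : ∀ k, AEStronglyMeasurable (Y k) P)
    {p : ℝ≥0∞} (hp : 1 ≤ p) (hsum : ∑' k, eLpNorm (Y k - Y (k + 1)) p P ≠ ∞) :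
    ∀ᵐ ω ∂P, ∃ l, Tendsto (fun k => Y k ω) atTop (𝓝 l) := by
  filter_upwards [summable_norm_of_tsum_eLpNorm_ne_top hp (fun k => (hY k).sub (hY (k + 1))) hsum]
    with ω hω
  exact cauchySeq_tendsto_of_complete
    (cauchySeq_of_summable_dist (by simpa [dist_eq_norm] using hω))

theorem eventually_succ_pow_le_mul_pow {a : ℝ} (ha : 1 < a) (d : ℕ) :
    ∀ᶠ k : ℕ in atTop, (((k + 1 + 1) ^ d : ℕ) : ℝ) ≤ a * ((k + 1) ^ d : ℕ) := by
  have hlim : Tendsto (fun k : ℕ => (1 + 1 / ((k : ℝ) + 1)) ^ d) atTop (𝓝 1) := by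
    simpa using (tendsto_one_div_add_atTop_nhds_zero_nat.const_add (1 : ℝ)).pow d
  filter_upwards [hlim.eventually (gt_mem_nhds ha)] with k hk
  calc (((k + 1 + 1) ^ d : ℕ) : ℝ) = (1 + 1 / ((k : ℝ) + 1)) ^ d * ((k + 1) ^ d : ℕ) := by
        push_cast; rw [← mul_pow]; congr 1; field_simp
    _ ≤ a * ((k + 1) ^ d : ℕ) := by gcongr

theorem tendsto_average_of_tendsto_average_succ_pow {x : ℕ → ℝ} (hx : ∀ i, 0 ≤ x i) {d : ℕ}
    (hd : d ≠ 0) {l : ℝ}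
    (h : Tendsto (fun k => (∑ i ∈ Finset.range ((k + 1) ^ d), x i) / ((k + 1) ^ d : ℕ))
      atTop (𝓝 l)) :
    Tendsto (fun n => (∑ i ∈ Finset.range n, x i) / n) atTop (𝓝 l) :=
  tendsto_div_of_monotone_of_exists_subseq_tendsto_div _ l
    (fun _ _ hmn => Finset.sum_le_sum_of_subset_of_nonneg (Finset.range_mono hmn)
      fun i _ _ => hx i)
    fun _ ha => ⟨fun k => (k + 1) ^ d, eventually_succ_pow_le_mul_pow ha d,
      (tendsto_pow_atTop hd).comp (tendsto_add_atTop_nat 1), h⟩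

end

namespace Exchangeable

variable {Ω : Type*} [MeasurableSpace Ω] {P : Measure Ω} {ξ : ℕ → Ω → ℝ}

theorem comp (hmeas : ∀ i, Measurable (ξ i)) (hexch : Exchangeable P ξ) {g : ℝ → ℝ}
    (hg : Measurable g) : Exchangeable P (fun i ω => g (ξ i ω)) := by
  intro n π
  have hG : Measurable fun (y : Fin n → ℝ) i => g (y i) := by fun_prop
  have h := congrArg (Measure.map fun (y : Fin n → ℝ) i => g (y i)) (hexch n π)
  rwa [Measure.map_map hG (by fun_prop), Measure.map_map hG (by fun_prop)] at h

theorem identDistrib_comp_injective (hmeas : ∀ i, Measurable (ξ i)) (hexch : Exchangeable P ξ)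
    {k : ℕ} {u : Fin k → ℕ} (hu : Function.Injective u) :
    IdentDistrib (fun ω t => ξ (u t) ω) (fun ω (t : Fin k) => ξ t ω) P P := by
  set N := k + ∑ t, (u t + 1)
  have hu_lt (t : Fin k) : u t < N := by
    have := Finset.single_le_sum (fun s _ => Nat.zero_le (u s + 1)) (Finset.mem_univ t)
    omega
  have hkN : k ≤ N := Nat.le_add_right _ _
  obtain ⟨σ, hσ⟩ := Equiv.Perm.exists_extending_pair (fun t : Fin k => Fin.castLE hkN t)
    (fun t => (⟨u t, hu_lt t⟩ : Fin N)) (Fin.castLE_injective _)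
    (fun s t h => hu (congrArg Fin.val h))
  have hrestrict : Measurable fun (y : Fin N → ℝ) (t : Fin k) => y (Fin.castLE hkN t) := by
    fun_prop
  refine ⟨by fun_prop, by fun_prop, ?_⟩
  have h := congrArg (Measure.map fun (y : Fin N → ℝ) (t : Fin k) => y (Fin.castLE hkN t))
    (hexch N σ)
  rw [Measure.map_map hrestrict (by fun_prop), Measure.map_map hrestrict (by fun_prop)] at h
  convert h using 2 <;> funext ω t <;> simp [hσ]

theorem identDistrib (hmeas : ∀ i, Measurable (ξ i)) (hexch : Exchangeable P ξ) (i : ℕ) :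
    IdentDistrib (ξ i) (ξ 0) P P :=
  (hexch.identDistrib_comp_injective hmeas (u := ![i]) (Function.injective_of_subsingleton _)).comp
    (measurable_pi_apply 0)

theorem integral_mul_eq (hmeas : ∀ i, Measurable (ξ i)) (hexch : Exchangeable P ξ) {i j : ℕ}
    (hij : i ≠ j) : ∫ ω, ξ i ω * ξ j ω ∂P = ∫ ω, ξ 0 ω * ξ 1 ω ∂P := by
  have hu : Function.Injective ![i, j] := by
    intro s t; fin_cases s <;> fin_cases t <;> simp [hij, hij.symm]
  exact ((hexch.identDistrib_comp_injective hmeas hu).comp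
    (u := fun y : Fin 2 → ℝ => y 0 * y 1) (by fun_prop)).integral_eq

theorem integral_sq_sum_mul (hmeas : ∀ i, Measurable (ξ i)) (hexch : Exchangeable P ξ)
    (hL2 : MemLp (ξ 0) 2 P) (s : Finset ℕ) (c : ℕ → ℝ) :
    ∫ ω, (∑ i ∈ s, c i * ξ i ω) ^ 2 ∂P =
      (∫ ω, ξ 0 ω ^ 2 ∂P - ∫ ω, ξ 0 ω * ξ 1 ω ∂P) * ∑ i ∈ s, c i ^ 2 +
        (∫ ω, ξ 0 ω * ξ 1 ω ∂P) * (∑ i ∈ s, c i) ^ 2 := by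
  set a := ∫ ω, ξ 0 ω ^ 2 ∂P
  set b := ∫ ω, ξ 0 ω * ξ 1 ω ∂P
  have hL2' (i : ℕ) : MemLp (ξ i) 2 P := (hexch.identDistrib hmeas i).memLp_iff.2 hL2
  have hint (i j : ℕ) : Integrable (fun ω => c i * c j * (ξ i ω * ξ j ω)) P :=
    ((hL2' i).integrable_mul (hL2' j)).const_mul _
  have hmoment (i j : ℕ) : ∫ ω, ξ i ω * ξ j ω ∂P = if i = j then a else b := by
    split_ifs with hij
    · subst hij
      simp_rw [← sq]
      exact ((hexch.identDistrib hmeas i).comp (u := fun x : ℝ => x ^ 2) (by fun_prop)).integral_eq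
    · exact hexch.integral_mul_eq hmeas hij
  calc ∫ ω, (∑ i ∈ s, c i * ξ i ω) ^ 2 ∂P
      = ∫ ω, ∑ i ∈ s, ∑ j ∈ s, c i * c j * (ξ i ω * ξ j ω) ∂P := by
        congr 1; funext ω
        rw [sq, Finset.sum_mul_sum]
        exact Finset.sum_congr rfl fun i _ => Finset.sum_congr rfl fun j _ => by ring
    _ = ∑ i ∈ s, ∑ j ∈ s, c i * c j * (if i = j then a else b) := by
        rw [integral_finsetSum _ fun i _ => integrable_finsetSum _ fun j _ => hint i j]
        refine Finset.sum_congr rfl fun i _ => ?_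
        rw [integral_finsetSum _ fun j _ => hint i j]
        refine Finset.sum_congr rfl fun j _ => ?_
        rw [integral_const_mul, hmoment]
    _ = (a - b) * ∑ i ∈ s, c i ^ 2 + b * (∑ i ∈ s, c i) ^ 2 := by
        have hsplit (i j : ℕ) : c i * c j * (if i = j then a else b) =
            b * (c i * c j) + if i = j then (a - b) * c i ^ 2 else 0 := by
          split_ifs with h
          · subst h; ring
          · ring
        simp only [hsplit, Finset.sum_add_distrib, Finset.sum_ite_eq, Finset.sum_ite_mem,
          Finset.inter_self, ← Finset.mul_sum, sq, Finset.sum_mul_sum]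
        ring

theorem integral_sq_average_sub (hmeas : ∀ i, Measurable (ξ i)) (hexch : Exchangeable P ξ)
    (hL2 : MemLp (ξ 0) 2 P) {m n : ℕ} (hm : 0 < m) (hmn : m ≤ n) :
    ∫ ω, ((∑ i ∈ Finset.range m, ξ i ω) / m - (∑ i ∈ Finset.range n, ξ i ω) / n) ^ 2 ∂P =
      (∫ ω, ξ 0 ω ^ 2 ∂P - ∫ ω, ξ 0 ω * ξ 1 ω ∂P) * (1 / m - 1 / n) := by
  have hm' : (m : ℝ) ≠ 0 := by positivity
  have hn' : (n : ℝ) ≠ 0 := by have : 0 < n := hm.trans_le hmn; positivity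
  have hsum_ite (f : ℕ → ℝ) :
      ∑ i ∈ Finset.range n, (if i < m then f i else 0) = ∑ i ∈ Finset.range m, f i := by
    rw [← Finset.sum_filter]
    congr 1
    ext i
    simp only [Finset.mem_filter, Finset.mem_range]
    omega
  set c : ℕ → ℝ := fun i => (if i < m then (m : ℝ)⁻¹ else 0) - (n : ℝ)⁻¹
  have hrepr (ω : Ω) : (∑ i ∈ Finset.range m, ξ i ω) / m - (∑ i ∈ Finset.range n, ξ i ω) / n =
      ∑ i ∈ Finset.range n, c i * ξ i ω := by
    simp only [c, sub_mul, ite_mul, zero_mul, Finset.sum_sub_distrib, hsum_ite, ← Finset.mul_sum]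
    ring
  have hc_sum : ∑ i ∈ Finset.range n, c i = 0 := by
    simp only [c, Finset.sum_sub_distrib, hsum_ite, Finset.sum_const, Finset.card_range,
      nsmul_eq_mul]
    field_simp
    ring
  have hc_sq : ∑ i ∈ Finset.range n, c i ^ 2 = 1 / m - 1 / n := by
    have hc (i : ℕ) : c i ^ 2 =
        (if i < m then (m : ℝ)⁻¹ * ((m : ℝ)⁻¹ - 2 * (n : ℝ)⁻¹) else 0) + (n : ℝ)⁻¹ ^ 2 := by
      simp only [c]; split_ifs <;> ring
    simp only [hc, Finset.sum_add_distrib, hsum_ite, Finset.sum_const, Finset.card_range,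
      nsmul_eq_mul]
    field_simp
    ring
  simp only [hrepr, hexch.integral_sq_sum_mul hmeas hL2, hc_sum, hc_sq]
  ring

theorem memLp_average_sub (hmeas : ∀ i, Measurable (ξ i)) (hexch : Exchangeable P ξ)
    (hL2 : MemLp (ξ 0) 2 P) (m n : ℕ) :
    MemLp (fun ω => (∑ i ∈ Finset.range m, ξ i ω) / m - (∑ i ∈ Finset.range n, ξ i ω) / n)
      2 P := by
  have hL2_average (k : ℕ) : MemLp (fun ω => (∑ i ∈ Finset.range k, ξ i ω) / k) 2 P := by
    simp_rw [div_eq_mul_inv]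
    exact (memLp_finsetSum _ fun i _ => (hexch.identDistrib hmeas i).memLp_iff.2 hL2).mul_const _
  exact (hL2_average m).sub (hL2_average n)

theorem eLpNorm_average_sub_le (hmeas : ∀ i, Measurable (ξ i)) (hexch : Exchangeable P ξ)
    (hL2 : MemLp (ξ 0) 2 P) {m n : ℕ} (hm : 0 < m) (hmn : m ≤ n) :
    eLpNorm (fun ω => (∑ i ∈ Finset.range m, ξ i ω) / m - (∑ i ∈ Finset.range n, ξ i ω) / n)
      2 P ≤ ENNReal.ofReal (√|∫ ω, ξ 0 ω ^ 2 ∂P - ∫ ω, ξ 0 ω * ξ 1 ω ∂P| * √(1 / m)) := by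
  rw [eLpNorm_two_eq_ofReal_sqrt_integral_sq (hexch.memLp_average_sub hmeas hL2 m n),
    hexch.integral_sq_average_sub hmeas hL2 hm hmn, ← Real.sqrt_mul (abs_nonneg _)]
  refine ENNReal.ofReal_le_ofReal (Real.sqrt_le_sqrt ?_)
  have h0 : 0 ≤ 1 / (m : ℝ) - 1 / n := sub_nonneg.2 (by gcongr)
  have h1 : 1 / (m : ℝ) - 1 / n ≤ 1 / m := sub_le_self _ (by positivity)
  calc _ ≤ |∫ ω, ξ 0 ω ^ 2 ∂P - ∫ ω, ξ 0 ω * ξ 1 ω ∂P| * (1 / (m : ℝ) - 1 / n) :=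
        mul_le_mul_of_nonneg_right (le_abs_self _) h0
    _ ≤ _ := mul_le_mul_of_nonneg_left h1 (abs_nonneg _)

theorem ae_exists_tendsto_average_subseq (hmeas : ∀ i, Measurable (ξ i))
    (hexch : Exchangeable P ξ) (hL2 : MemLp (ξ 0) 2 P) {n : ℕ → ℕ} (hn : Monotone n)
    (hpos : ∀ k, 0 < n k) (hsum : Summable fun k => √(1 / (n k : ℝ))) :
    ∀ᵐ ω ∂P, ∃ l, Tendsto (fun k => (∑ i ∈ Finset.range (n k), ξ i ω) / n k) atTop (𝓝 l) := by
  set C := √|∫ ω, ξ 0 ω ^ 2 ∂P - ∫ ω, ξ 0 ω * ξ 1 ω ∂P|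
  have hfin : ∑' k, eLpNorm (fun ω => (∑ i ∈ Finset.range (n k), ξ i ω) / n k -
      (∑ i ∈ Finset.range (n (k + 1)), ξ i ω) / n (k + 1)) 2 P ≠ ∞ := by
    refine ne_top_of_le_ne_top (ENNReal.ofReal_ne_top (r := ∑' k, C * √(1 / (n k : ℝ)))) ?_
    rw [ENNReal.ofReal_tsum_of_nonneg (fun k => by positivity) (hsum.mul_left C)]
    exact ENNReal.tsum_le_tsum fun k =>
      hexch.eLpNorm_average_sub_le hmeas hL2 (hpos k) (hn k.le_succ)
  exact ae_exists_tendsto_of_tsum_eLpNorm_sub_ne_top (fun k => by fun_prop) one_le_two hfin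

theorem ae_exists_tendsto_average_of_nonneg (hmeas : ∀ i, Measurable (ξ i))
    (hexch : Exchangeable P ξ) (hL2 : MemLp (ξ 0) 2 P) (hnonneg : ∀ i ω, 0 ≤ ξ i ω) :
    ∀ᵐ ω ∂P, ∃ l, Tendsto (fun n => (∑ i ∈ Finset.range n, ξ i ω) / n) atTop (𝓝 l) := by
  have hsum : Summable fun k : ℕ => √(1 / (((k + 1) ^ 4 : ℕ) : ℝ)) := by
    refine ((summable_nat_add_iff 1).2 (Real.summable_one_div_nat_pow.2 one_lt_two)).congr
      fun k => ?_
    rw [show (((k + 1) ^ 4 : ℕ) : ℝ) = (((k + 1 : ℕ) : ℝ) ^ 2) ^ 2 by push_cast; ring,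
      one_div, one_div, Real.sqrt_inv, Real.sqrt_sq (by positivity)]
  filter_upwards [hexch.ae_exists_tendsto_average_subseq hmeas hL2 (n := fun k => (k + 1) ^ 4)
    (fun _ _ h => Nat.pow_le_pow_left (by omega) 4) (fun k => by positivity) hsum] with ω ⟨l, hl⟩
  exact ⟨l, tendsto_average_of_tendsto_average_succ_pow (fun i => hnonneg i ω) four_ne_zero hl⟩

end Exchangeable

theorem stmt10_general {Ω : Type*} [MeasurableSpace Ω] (P : Measure Ω)
    (ξ : ℕ → Ω → ℝ) (hmeas : ∀ i, Measurable (ξ i)) (hexch : Exchangeable P ξ)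
    (hmom : ∀ p : ℕ, Integrable (fun ω => |ξ 0 ω| ^ p) P) :
    ∃ M : Ω → ℝ, Measurable M ∧
      ∀ᵐ ω ∂P,
        Tendsto (fun n : ℕ => (∑ i ∈ Finset.range n, ξ i ω) / n) atTop (𝓝 (M ω)) := by
  have hL2 : MemLp (ξ 0) 2 P :=
    (memLp_two_iff_integrable_sq (hmeas 0).aestronglyMeasurable).2 (by simpa using hmom 2)
  have hpart {g : ℝ → ℝ} (hg : Measurable g) (hg0 : ∀ x, 0 ≤ g x) (hg_le : ∀ x, g x ≤ |x|) :
      ∀ᵐ ω ∂P, ∃ l, Tendsto (fun n => (∑ i ∈ Finset.range n, g (ξ i ω)) / n) atTop (𝓝 l) :=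
    (hexch.comp hmeas hg).ae_exists_tendsto_average_of_nonneg (fun i => hg.comp (hmeas i))
      (hL2.mono (hg.comp (hmeas 0)).aestronglyMeasurable
        (ae_of_all _ fun ω => by simpa [abs_of_nonneg (hg0 _)] using hg_le (ξ 0 ω)))
      fun i ω => hg0 _
  have hconv : ∀ᵐ ω ∂P, ∃ l,
      Tendsto (fun n : ℕ => (∑ i ∈ Finset.range n, ξ i ω) / n) atTop (𝓝 l) := by
    filter_upwards [hpart (g := fun x => max x 0) (by fun_prop) (fun x => le_max_right _ _)
        (fun x => max_le (le_abs_self x) (abs_nonneg x)),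
      hpart (g := fun x => max (-x) 0) (by fun_prop) (fun x => le_max_right _ _)
        (fun x => max_le (neg_le_abs x) (abs_nonneg x))] with ω ⟨l₁, h₁⟩ ⟨l₂, h₂⟩
    refine ⟨l₁ - l₂, (h₁.sub h₂).congr fun n => ?_⟩
    simp only [← sub_div, ← Finset.sum_sub_distrib, max_zero_sub_max_neg_zero_eq_self]
  obtain ⟨M, hM, hMt⟩ := measurable_limit_of_tendsto_metrizable_ae (fun n => by fun_prop) hconv
  exact ⟨M, hM, hMt⟩

/-- Strong law of large numbers for exchangeable sequences: the averages
`M_n = (1/n) Σ_{i<n} ξ_i` converge `P`-almost surely to a (real-valued) random variable. -/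
theorem stmt10 {Ω : Type*} [MeasurableSpace Ω] (P : Measure Ω) [IsProbabilityMeasure P]
    (ξ : ℕ → Ω → ℝ) (hmeas : ∀ i, Measurable (ξ i)) (hexch : Exchangeable P ξ)
    (hmom : ∀ p : ℕ, Integrable (fun ω => |ξ 0 ω| ^ p) P) :
    ∃ M : Ω → ℝ, Measurable M ∧
      ∀ᵐ ω ∂P,
        Tendsto (fun n : ℕ => (∑ i ∈ Finset.range n, ξ i ω) / n) atTop (𝓝 (M ω)) :=
  stmt10_general P ξ hmeas hexch hmom
end

section
/- Let ν be a Borel probability measure on [0,∞) all of whose moments ∫ v^k dν(v), k ∈ ℕ, are finite, and let σ_μ be the mixture of semicircle laws defined by σ_μ(A) := ∫ σ_v(A) dν(v). Then σ_μ is a semicircle distribution, i.e. σ_μ = σ_s for some s ∈ [0,∞), if and only if there exists a ∈ [0,∞) such that ν = δ_a. -/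
open MeasureTheory ProbabilityTheory Filter Topology
open scoped ENNReal NNReal

noncomputable section

/-- The semicircle distribution `σ_v`: for `v ≠ 0` it has Lebesgue density
`(2πv)⁻¹ √(max (4v - x²) 0)`; `σ_0 := δ_0`. -/
def semicircle (v : ℝ) : Measure ℝ :=
  if v = 0 then Measure.dirac 0
  else MeasureTheory.volume.withDensity fun x =>
    ENNReal.ofReal ((2 * Real.pi * v)⁻¹ * Real.sqrt (max (4 * v - x ^ 2) 0))

/-!
Since `σ_s` puts no mass to the right of `2√s` while every `σ_v` with `v > s` does, a mixture
equal to `σ_s` forces `v ≤ s` for `ν`-almost every `v`. The second moment of `σ_v` is `v`, so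
comparing second moments gives `∫ v dν(v) = s`; together with `v ≤ s` a.e. this makes `ν = δ_s`.
-/

open Real Set intervalIntegral

lemma integral_sq_mul_sqrt_one_sub_sq : ∫ x in (-1 : ℝ)..1, x ^ 2 * √(1 - x ^ 2) = π / 8 := by
  calc ∫ x in (-1 : ℝ)..1, x ^ 2 * √(1 - x ^ 2)
      = ∫ x in sin (-(π / 2))..sin (π / 2), x ^ 2 * √(1 - x ^ 2) := by
        rw [sin_neg, sin_pi_div_two]
    _ = ∫ x in -(π / 2)..π / 2, (sin x ^ 2 * √(1 - sin x ^ 2)) * cos x :=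
        (integral_comp_mul_deriv (fun x _ => hasDerivAt_sin x) continuousOn_cos
          (by fun_prop)).symm
    _ = ∫ x in -(π / 2)..π / 2, sin x ^ 2 * cos x ^ 2 := by
        refine integral_congr fun x hx => ?_
        rw [uIcc_of_le (by linarith [pi_pos]), mem_Icc] at hx
        rw [← cos_eq_sqrt_one_sub_sin_sq hx.1 hx.2]
        ring
    _ = π / 8 := by
        rw [integral_sin_sq_mul_cos_sq, show 4 * (π / 2) = 2 * π by ring,
          show 4 * -(π / 2) = -(2 * π) by ring]
        simp

lemma integral_sq_mul_sqrt_sq_sub_sq {r : ℝ} (hr : 0 ≤ r) :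
    ∫ x in -r..r, x ^ 2 * √(r ^ 2 - x ^ 2) = π * r ^ 4 / 8 := by
  have hscale : ∀ x : ℝ,
      (r * x) ^ 2 * √(r ^ 2 - (r * x) ^ 2) = r ^ 3 * (x ^ 2 * √(1 - x ^ 2)) := by
    intro x
    rw [show r ^ 2 - (r * x) ^ 2 = r ^ 2 * (1 - x ^ 2) by ring, sqrt_mul (sq_nonneg r),
      sqrt_sq hr]
    ring
  have h := mul_integral_comp_mul_left (a := -1) (b := 1) (c := r)
    (f := fun x => x ^ 2 * √(r ^ 2 - x ^ 2))
  simp only [hscale, intervalIntegral.integral_const_mul, integral_sq_mul_sqrt_one_sub_sq,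
    mul_neg_one, mul_one] at h
  rw [← h]
  ring

def semicircleDensity (v x : ℝ) : ℝ := (2 * π * v)⁻¹ * √(max (4 * v - x ^ 2) 0)

lemma semicircle_of_ne_zero {v : ℝ} (hv : v ≠ 0) :
    semicircle v = volume.withDensity fun x => ENNReal.ofReal (semicircleDensity v x) :=
  if_neg hv

lemma semicircleDensity_nonneg {v : ℝ} (hv : 0 ≤ v) (x : ℝ) : 0 ≤ semicircleDensity v x := by
  unfold semicircleDensity
  positivity

lemma semicircleDensity_pos {v x : ℝ} (hv : 0 < v) (h : x ^ 2 < 4 * v) :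
    0 < semicircleDensity v x := by
  unfold semicircleDensity
  have : 0 < max (4 * v - x ^ 2) 0 := lt_max_of_lt_left (by linarith)
  positivity

lemma semicircleDensity_eq_zero_of_le {v x : ℝ} (h : 4 * v ≤ x ^ 2) :
    semicircleDensity v x = 0 := by
  simp [semicircleDensity, max_eq_right (sub_nonpos.mpr h)]

lemma measurable_semicircleDensity : Measurable (Function.uncurry semicircleDensity) := by
  unfold semicircleDensity Function.uncurry
  fun_prop

lemma measurable_ofReal_semicircleDensity (v : ℝ) :
    Measurable fun x => ENNReal.ofReal (semicircleDensity v x) :=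
  measurable_semicircleDensity.of_uncurry_left.ennreal_ofReal

lemma measurable_semicircle : Measurable semicircle := by
  refine Measure.measurable_of_measurable_coe _ fun t ht => ?_
  simp only [semicircle, apply_ite (fun μ : Measure ℝ => μ t)]
  refine Measurable.ite (measurableSet_singleton 0) measurable_const ?_
  simp_rw [withDensity_apply _ ht]
  exact (measurable_semicircleDensity.ennreal_ofReal).lintegral_prod_right'

lemma lintegral_sq_semicircle {v : ℝ} (hv : 0 ≤ v) :
    ∫⁻ x, ENNReal.ofReal (x ^ 2) ∂semicircle v = ENNReal.ofReal v := by
  rcases hv.eq_or_lt with rfl | hv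
  · simp [semicircle]
  set r := 2 * √v
  have hr : 0 ≤ r := by positivity
  have hr2 : r ^ 2 = 4 * v := by rw [mul_pow, sq_sqrt hv.le]; ring
  set G : ℝ → ℝ := fun x => semicircleDensity v x * x ^ 2
  have hG : ∀ x ∈ Icc (-r) r, G x = (2 * π * v)⁻¹ * (x ^ 2 * √(r ^ 2 - x ^ 2)) := by
    intro x hx
    have : x ^ 2 ≤ r ^ 2 := sq_le_sq' hx.1 hx.2
    simp only [G, semicircleDensity, hr2, max_eq_left (sub_nonneg.mpr (hr2 ▸ this))]
    ring
  have hsupp : (fun x => ENNReal.ofReal (G x)).support ⊆ Ioc (-r) r := by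
    refine Function.support_subset_iff'.mpr fun x hx => ?_
    have : r ^ 2 ≤ x ^ 2 := by
      rw [mem_Ioc, not_and_or, not_lt, not_le] at hx
      rcases hx with hx | hx <;> nlinarith
    simp [G, semicircleDensity_eq_zero_of_le (hr2 ▸ this)]
  have hGint : IntegrableOn G (Ioc (-r) r) := by
    refine (Continuous.integrableOn_Icc ?_).mono_set Ioc_subset_Icc_self
    unfold G semicircleDensity
    fun_prop
  calc ∫⁻ x, ENNReal.ofReal (x ^ 2) ∂semicircle v
      = ∫⁻ x, ENNReal.ofReal (G x) := by
        rw [semicircle_of_ne_zero hv.ne', lintegral_withDensity_eq_lintegral_mul₀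
          (measurable_ofReal_semicircleDensity v).aemeasurable (by fun_prop)]
        refine lintegral_congr fun x => ?_
        simp only [Pi.mul_apply, G, ← ENNReal.ofReal_mul (semicircleDensity_nonneg hv.le x)]
    _ = ∫⁻ x in Ioc (-r) r, ENNReal.ofReal (G x) := (setLIntegral_eq_of_support_subset hsupp).symm
    _ = ENNReal.ofReal (∫ x in -r..r, G x) := by
        rw [integral_of_le (by linarith), ofReal_integral_eq_lintegral_ofReal hGint
          (ae_of_all _ fun x => mul_nonneg (semicircleDensity_nonneg hv.le x) (sq_nonneg x))]
    _ = ENNReal.ofReal v := by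
        rw [integral_congr fun x hx => hG x (uIcc_of_le (by linarith : -r ≤ r) ▸ hx),
          intervalIntegral.integral_const_mul, integral_sq_mul_sqrt_sq_sub_sq hr,
          show r ^ 4 = (r ^ 2) ^ 2 by ring, hr2]
        congr 1
        field_simp
        ring

lemma semicircle_Ioi_eq_zero {s : ℝ} (hs : 0 ≤ s) : semicircle s (Ioi (2 * √s)) = 0 := by
  rcases hs.eq_or_lt with rfl | hs
  · simp [semicircle]
  rw [semicircle_of_ne_zero hs.ne',
    withDensity_apply_eq_zero (measurable_ofReal_semicircleDensity s)]
  convert measure_empty (μ := volume)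
  refine eq_empty_of_forall_notMem fun x ⟨hx, hlt⟩ => hx ?_
  have : 4 * s ≤ x ^ 2 := by
    nlinarith [mem_Ioi.mp hlt, sq_sqrt hs.le, sqrt_nonneg s]
  simp [semicircleDensity_eq_zero_of_le this]

lemma semicircle_Ioi_ne_zero {v c : ℝ} (hv : 0 < v) (hc : c < 2 * √v) :
    semicircle v (Ioi c) ≠ 0 := by
  set r := 2 * √v
  have hr : 0 < r := by positivity
  have hr2 : r ^ 2 = 4 * v := by rw [mul_pow, sq_sqrt hv.le]; ring
  rw [semicircle_of_ne_zero hv.ne', Ne,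
    withDensity_apply_eq_zero (measurable_ofReal_semicircleDensity v)]
  have hsub : Ioo (max c (-r)) r ⊆ {x | ENNReal.ofReal (semicircleDensity v x) ≠ 0} ∩ Ioi c := by
    intro x ⟨hlo, hhi⟩
    have : x ^ 2 < r ^ 2 := sq_lt_sq' (lt_of_le_of_lt (le_max_right _ _) hlo) hhi
    exact ⟨(ENNReal.ofReal_pos.mpr (semicircleDensity_pos hv (hr2 ▸ this))).ne',
      lt_of_le_of_lt (le_max_left _ _) hlo⟩
  exact fun h => isOpen_Ioo.measure_ne_zero volume (nonempty_Ioo.mpr (max_lt hc (by linarith)))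
    (measure_mono_null hsub h)

lemma MeasureTheory.Measure.eq_dirac_of_ae_eq {α : Type*} [MeasurableSpace α]
    [MeasurableSingletonClass α] {μ : Measure α} [IsProbabilityMeasure μ] {a : α}
    (h : ∀ᵐ x ∂μ, x = a) :
    μ = Measure.dirac a := by
  conv_lhs => rw [← Measure.map_id (μ := μ)]
  rw [Measure.map_congr (f := id) (g := fun _ => a) h, Measure.map_const, measure_univ, one_smul]

section Mixture

variable {ν : Measure ℝ} {s : ℝ}

lemma ae_le_of_bind_semicircle_eq (hs : 0 ≤ s) (h : ν.bind semicircle = semicircle s) :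
    ∀ᵐ v ∂ν, v ≤ s := by
  have htail : ∫⁻ v, semicircle v (Ioi (2 * √s)) ∂ν = 0 := by
    rw [← Measure.bind_apply measurableSet_Ioi measurable_semicircle.aemeasurable, h,
      semicircle_Ioi_eq_zero hs]
  filter_upwards [(lintegral_eq_zero_iff
    ((Measure.measurable_coe measurableSet_Ioi).comp measurable_semicircle)).mp htail] with v hv
  by_contra! hsv
  exact semicircle_Ioi_ne_zero (hs.trans_lt hsv) (by gcongr) hv

lemma lintegral_ofReal_of_bind_semicircle_eq (hν : ∀ᵐ v ∂ν, 0 ≤ v) (hs : 0 ≤ s)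
    (h : ν.bind semicircle = semicircle s) :
    ∫⁻ v, ENNReal.ofReal v ∂ν = ENNReal.ofReal s := by
  rw [← lintegral_sq_semicircle hs, ← h, Measure.lintegral_bind measurable_semicircle.aemeasurable
    (by fun_prop)]
  exact lintegral_congr_ae (hν.mono fun v hv => (lintegral_sq_semicircle hv).symm)

end Mixture

theorem stmt16_general (ν : Measure ℝ) [IsProbabilityMeasure ν] (hν : ν (Set.Iio 0) = 0) :
    (∃ s : ℝ, 0 ≤ s ∧ ν.bind semicircle = semicircle s) ↔
      (∃ a : ℝ, 0 ≤ a ∧ ν = Measure.dirac a) := by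
  refine ⟨fun ⟨s, hs, h⟩ => ⟨s, hs, ?_⟩, ?_⟩
  · have hν0 : ∀ᵐ v ∂ν, 0 ≤ v := ae_iff.mpr (measure_mono_null (fun _ => not_le.mp) hν)
    have hmean := lintegral_ofReal_of_bind_semicircle_eq hν0 hs h
    have hofReal : (fun v => ENNReal.ofReal v) =ᵐ[ν] fun _ => ENNReal.ofReal s :=
      ae_eq_of_ae_le_of_lintegral_le
        ((ae_le_of_bind_semicircle_eq hs h).mono fun v hv => ENNReal.ofReal_le_ofReal hv)
        (by simp [hmean]) aemeasurable_const (by simp [hmean])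
    refine Measure.eq_dirac_of_ae_eq ?_
    filter_upwards [hofReal, hν0] with v hv h0
    exact (ENNReal.ofReal_eq_ofReal_iff h0 hs).mp hv
  · rintro ⟨a, ha, rfl⟩
    exact ⟨a, ha, Measure.dirac_bind measurable_semicircle a⟩

/-- A mixture `σ_μ = ∫ σ_v dν(v)` of semicircle laws (with `ν` a Borel
probability measure on `[0,∞)` having finite moments of all orders) is itself a semicircle
distribution if and only if `ν` is a Dirac measure `δ_a` for some `a ∈ [0,∞)`. -/
theorem stmt16 (ν : Measure ℝ) [IsProbabilityMeasure ν] (hν : ν (Set.Iio 0) = 0)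
    (hmom : ∀ k : ℕ, Integrable (fun v => v ^ k) ν) :
    (∃ s : ℝ, 0 ≤ s ∧ ν.bind semicircle = semicircle s) ↔
      (∃ a : ℝ, 0 ≤ a ∧ ν = Measure.dirac a) :=
  stmt16_general ν hν
end
end
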